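/- Suppose C is submodular and the valuations are supermodular (or n = 2). Then the Potential Mechanism is H_n-budget-balanced: its total payments satisfy C(ALG) ≤ Σ_i p_i ≤ H_n · C(ALG). -/

import Mathlib

open Finset

variable {α : Type*}

noncomputable def potential [DecidableEq α] (n : ℕ)
    (C : Finset α → ℝ) (S : Fin n → Finset α) : ℝ :=
  ∑ I ∈ (univ : Finset (Fin n)).powerset.filter (· ≠ ∅),
    C (I.biUnion S) / ((I.card : ℝ) * (n.choose I.card : ℝ))

/-!
The lower bound rests on a Shapley-type identity for the potential,
`∑ i, (P S - P (S without i)) = C (⋃ S) - C ∅`, together with `p i ≥ P ALG - P (ALG without i)`,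
which holds because `ALG` without player `i` competes in the maximisation defining `A i`.

For the upper bound, the welfare `W = ∑ v - P` is supermodular on allocations below `M`
(submodularity of `C` passes to `P` because the `M i` are disjoint). Merging the `A i` one at a
time, each merge bounded by the maximiser `ALG`, gives `∑ i, W (A i) ≤ (n - 1) W ALG`, i.e.
`∑ i, p i ≤ P ALG`; finally `P ALG ≤ H_n C ALG` because the weights of `P` sum to `H_n`.
-/

open Function

/-- `potentialWeight n 0 = 0` (as `0⁻¹ = 0`), matching the omission of `I = ∅` in `potential`. -/
noncomputable def potentialWeight (n k : ℕ) : ℝ := ((k : ℝ) * n.choose k)⁻¹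

lemma potentialWeight_nonneg (n k : ℕ) : 0 ≤ potentialWeight n k := by
  unfold potentialWeight; positivity

lemma potentialWeight_zero (n : ℕ) : potentialWeight n 0 = 0 := by
  simp [potentialWeight]

lemma choose_mul_potentialWeight {n k : ℕ} (hk : k ≤ n) :
    (n.choose k : ℝ) * potentialWeight n k = (k : ℝ)⁻¹ := by
  have : (n.choose k : ℝ) ≠ 0 := by exact_mod_cast (Nat.choose_pos hk).ne'
  rw [potentialWeight, mul_inv, mul_left_comm, mul_inv_cancel₀ this, mul_one]

/-- The coefficient of `C (J.biUnion S)`, `#J = k`, in `∑ i, (potential S - potential (S without i))`;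
it vanishes unless `J = univ` or `J = ∅`. -/
lemma card_mul_potentialWeight_sub {n k : ℕ} (hn : 0 < n) (hk : k ≤ n) :
    (k : ℝ) * potentialWeight n k - ((n : ℝ) - k) * potentialWeight n (k + 1)
      = (if k = n then 1 else 0) - (if k = 0 then 1 else 0) := by
  rcases Nat.eq_zero_or_pos k with rfl | hk0
  · simp [potentialWeight, hn.ne, hn.ne']
  rcases hk.eq_or_lt with rfl | hkn
  · simp [potentialWeight, hk0.ne']
  have hc : ((k + 1 : ℕ) : ℝ) * n.choose (k + 1) = ((n : ℝ) - k) * n.choose k := by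
    rw [← Nat.cast_sub hk]
    exact_mod_cast (by rw [mul_comm, Nat.choose_succ_right_eq, mul_comm] :
      (k + 1) * n.choose (k + 1) = (n - k) * n.choose k)
  have hnk : (n : ℝ) - k ≠ 0 := sub_ne_zero.2 (by exact_mod_cast hkn.ne')
  rw [potentialWeight, potentialWeight, hc, if_neg hkn.ne, if_neg hk0.ne', mul_inv, mul_inv,
    ← mul_assoc, ← mul_assoc, mul_inv_cancel₀ (by exact_mod_cast hk0.ne'),
    mul_inv_cancel₀ hnk, sub_self, sub_self]

lemma sum_potentialWeight (n : ℕ) :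
    ∑ I : Finset (Fin n), potentialWeight n #I = ∑ k ∈ range n, 1 / ((k : ℝ) + 1) := by
  rw [← powerset_univ, sum_powerset_apply_card, card_univ, Fintype.card_fin, sum_range_succ',
    Nat.choose_zero_right, potentialWeight_zero, smul_zero, add_zero]
  refine sum_congr rfl fun k hk => ?_
  rw [nsmul_eq_mul, choose_mul_potentialWeight (mem_range.1 hk), one_div, Nat.cast_succ]

section

variable [DecidableEq α]

lemma potential_eq_sum_potentialWeight (n : ℕ) (C : Finset α → ℝ) (S : Fin n → Finset α) :
    potential n C S = ∑ I : Finset (Fin n), potentialWeight n #I * C (I.biUnion S) := by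
  rw [potential, sum_filter, powerset_univ]
  refine sum_congr rfl fun I _ => ?_
  rcases eq_or_ne I ∅ with rfl | hI
  · simp [potentialWeight_zero]
  · rw [if_pos hI, div_eq_inv_mul, potentialWeight]

lemma potential_le_harmonic_mul {n : ℕ} {C : Finset α → ℝ}
    (hC : ∀ S T : Finset α, S ⊆ T → C S ≤ C T) (S : Fin n → Finset α) :
    potential n C S ≤ (∑ k ∈ range n, 1 / ((k : ℝ) + 1)) * C (univ.biUnion S) := by
  rw [potential_eq_sum_potentialWeight, ← sum_potentialWeight, sum_mul]
  gcongr with I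
  · exact potentialWeight_nonneg _ _
  · exact hC _ _ (biUnion_subset_biUnion_of_subset_left _ (subset_univ I))

lemma sum_sum_mem_eq_sum_sum_compl {ι M : Type*} [Fintype ι] [DecidableEq ι] [AddCommMonoid M]
    (f : Finset ι → ι → M) :
    ∑ I : Finset ι, ∑ i ∈ I, f I i = ∑ J : Finset ι, ∑ i ∈ Jᶜ, f (insert i J) i := by
  rw [sum_sigma', sum_sigma']
  refine sum_bij' (fun x _ => ⟨x.1.erase x.2, x.2⟩) (fun x _ => ⟨insert x.2 x.1, x.2⟩)
    ?_ ?_ ?_ ?_ ?_ <;> simp_all [insert_erase]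

lemma biUnion_update_empty {ι : Type*} [DecidableEq ι] (S : ι → Finset α) (i : ι)
    (I : Finset ι) : I.biUnion (update S i ∅) = (I.erase i).biUnion S := by
  ext x
  simp only [mem_biUnion, mem_erase, update_apply]
  grind

lemma sum_potential_sub_potential_update {n : ℕ} (hn : 0 < n) (C : Finset α → ℝ)
    (S : Fin n → Finset α) :
    ∑ i, (potential n C S - potential n C (update S i ∅))
      = C (univ.biUnion S) - C ∅ := by
  have hvanish (I : Finset (Fin n)) (i : Fin n) (hi : i ∉ I) :
      potentialWeight n #I * (C (I.biUnion S) - C ((I.erase i).biUnion S)) = 0 := by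
    rw [erase_eq_of_notMem hi, sub_self, mul_zero]
  have hcompl (J : Finset (Fin n)) :
      ∑ i ∈ Jᶜ, potentialWeight n #(insert i J) * C ((insert i J).erase i |>.biUnion S)
        = ((n : ℝ) - #J) * potentialWeight n (#J + 1) * C (J.biUnion S) := by
    rw [sum_congr rfl fun i hi => by
      rw [card_insert_of_notMem (mem_compl.1 hi), erase_insert (mem_compl.1 hi)],
      sum_const, card_compl, nsmul_eq_mul, Nat.cast_sub (card_le_univ J), Fintype.card_fin,
      mul_assoc]
  calc ∑ i, (potential n C S - potential n C (update S i ∅))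
      = ∑ I : Finset (Fin n), ∑ i ∈ I,
          potentialWeight n #I * (C (I.biUnion S) - C ((I.erase i).biUnion S)) := by
        simp only [potential_eq_sum_potentialWeight, biUnion_update_empty, ← sum_sub_distrib,
          ← mul_sub]
        rw [sum_comm]
        exact sum_congr rfl fun I _ => (sum_subset (subset_univ I) fun i _ => hvanish I i).symm
    _ = ∑ J : Finset (Fin n), ((#J : ℝ) * potentialWeight n #J
          - ((n : ℝ) - #J) * potentialWeight n (#J + 1)) * C (J.biUnion S) := by
        simp only [mul_sub, sum_sub_distrib, sum_const, nsmul_eq_mul]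
        rw [sum_sum_mem_eq_sum_sum_compl, sum_congr rfl fun J _ => hcompl J, ← sum_sub_distrib]
        exact sum_congr rfl fun J _ => by ring
    _ = C (univ.biUnion S) - C ∅ := by
        have hcoef (J : Finset (Fin n)) : (#J : ℝ) * potentialWeight n #J
            - ((n : ℝ) - #J) * potentialWeight n (#J + 1)
              = (if J = univ then 1 else 0) - (if J = ∅ then 1 else 0) := by
          rw [card_mul_potentialWeight_sub hn (card_le_univ J |>.trans_eq (Fintype.card_fin n))]
          simp only [← card_eq_zero, ← card_eq_iff_eq_univ, Fintype.card_fin]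
        rw [sum_congr rfl fun J _ => by rw [hcoef J]]
        simp only [sub_mul, ite_mul, one_mul, zero_mul, sum_sub_distrib, sum_ite_eq',
          mem_univ, if_true, biUnion_empty]

lemma biUnion_sup {ι : Type*} (S T : ι → Finset α) (I : Finset ι) :
    I.biUnion (S ⊔ T) = I.biUnion S ∪ I.biUnion T := by
  ext x
  simp only [mem_biUnion, mem_union, Pi.sup_apply, sup_eq_union]
  grind

lemma biUnion_inf_of_pairwiseDisjoint {ι : Type*} {M : ι → Finset α} (hM : Pairwise (Disjoint on M))
    {S T : ι → Finset α} (hS : ∀ j, S j ⊆ M j) (hT : ∀ j, T j ⊆ M j) (I : Finset ι) :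
    I.biUnion (S ⊓ T) = I.biUnion S ∩ I.biUnion T := by
  ext x
  simp only [mem_biUnion, mem_inter, Pi.inf_apply, inf_eq_inter]
  refine ⟨fun ⟨j, hj, hxS, hxT⟩ => ⟨⟨j, hj, hxS⟩, ⟨j, hj, hxT⟩⟩, ?_⟩
  rintro ⟨⟨j, hj, hxS⟩, ⟨k, hk, hxT⟩⟩
  obtain rfl : j = k := hM.eq (not_disjoint_iff.2 ⟨x, hS j hxS, hT k hxT⟩)
  exact ⟨j, hj, hxS, hxT⟩

lemma potential_sup_add_potential_inf_le {n : ℕ} {C : Finset α → ℝ}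
    (hC : ∀ S T : Finset α, C (S ∪ T) + C (S ∩ T) ≤ C S + C T)
    {M : Fin n → Finset α} (hM : Pairwise (Disjoint on M))
    {S T : Fin n → Finset α} (hS : ∀ j, S j ⊆ M j) (hT : ∀ j, T j ⊆ M j) :
    potential n C (S ⊔ T) + potential n C (S ⊓ T) ≤ potential n C S + potential n C T := by
  simp only [potential_eq_sum_potentialWeight, ← sum_add_distrib, ← mul_add]
  refine sum_le_sum fun I _ => mul_le_mul_of_nonneg_left ?_ (potentialWeight_nonneg _ _)
  rw [biUnion_sup, biUnion_inf_of_pairwiseDisjoint hM hS hT]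
  exact hC _ _

/-- The objective maximised by the Potential Mechanism. -/
noncomputable def welfare {n : ℕ} (C : Finset α → ℝ) (v : Fin n → Finset α → ℝ)
    (S : Fin n → Finset α) : ℝ :=
  ∑ j, v j (S j) - potential n C S

lemma welfare_bot {n : ℕ} {C : Finset α → ℝ} (hC : C ∅ = 0) {v : Fin n → Finset α → ℝ}
    (hv : ∀ i, v i ∅ = 0) : welfare C v ⊥ = 0 := by
  have hbot (I : Finset (Fin n)) : I.biUnion (⊥ : Fin n → Finset α) = ∅ := by ext; simp
  simp [welfare, potential, hbot, hC, hv]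

lemma welfare_update_empty {n : ℕ} (C : Finset α → ℝ) {v : Fin n → Finset α → ℝ} {i : Fin n}
    (hv : v i ∅ = 0) (S : Fin n → Finset α) :
    welfare C v (update S i ∅)
      = ∑ j ∈ univ.erase i, v j (S j) - potential n C (update S i ∅) := by
  rw [welfare, ← add_sum_erase _ _ (mem_univ i), update_self, hv, zero_add]
  congr 1
  exact sum_congr rfl fun j hj => by rw [update_of_ne (ne_of_mem_erase hj)]

lemma welfare_add_welfare_le {n : ℕ} {C : Finset α → ℝ}
    (hC : ∀ S T : Finset α, C (S ∪ T) + C (S ∩ T) ≤ C S + C T)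
    {M : Fin n → Finset α} (hM : Pairwise (Disjoint on M)) {v : Fin n → Finset α → ℝ}
    {S T : Fin n → Finset α} (hS : ∀ j, S j ⊆ M j) (hT : ∀ j, T j ⊆ M j)
    (hv : ∀ j, v j (S j) + v j (T j) ≤ v j (S j ∪ T j) + v j (S j ∩ T j)) :
    welfare C v S + welfare C v T ≤ welfare C v (S ⊔ T) + welfare C v (S ⊓ T) := by
  have hsum : ∑ j, v j (S j) + ∑ j, v j (T j) ≤ ∑ j, v j (S j ∪ T j) + ∑ j, v j (S j ∩ T j) := by
    simp only [← sum_add_distrib]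
    exact sum_le_sum fun j _ => hv j
  have := potential_sup_add_potential_inf_le hC hM hS hT
  simp only [welfare, Pi.sup_apply, Pi.inf_apply, sup_eq_union, inf_eq_inter]
  linarith

theorem sum_le_card_sub_one_mul_add_inf' {L ι : Type*} [Lattice L] {P : L → Prop} {W : L → ℝ}
    (hsup : ∀ x y, P x → P y → P (x ⊔ y)) (hinf : ∀ x y, P x → P y → P (x ⊓ y))
    (hW : ∀ x y, P x → P y → W x + W y ≤ W (x ⊔ y) + W (x ⊓ y))
    {m : L} (hm : ∀ x, P x → W x ≤ W m) {a : ι → L} (ha : ∀ i, P (a i))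
    {K : Finset ι} (hK : K.Nonempty) :
    ∑ i ∈ K, W (a i) ≤ (#K - 1) * W m + W (K.inf' hK a) := by
  induction hK using Finset.Nonempty.cons_induction with
  | singleton i => simp
  | cons i K hi hK ih =>
    have hPinf : P (K.inf' hK a) := inf'_induction hK a (fun x hx y hy => hinf x y hx hy)
      fun j _ => ha j
    have hsuper := hW _ _ (ha i) hPinf
    have hmax := hm _ (hsup _ _ (ha i) hPinf)
    rw [sum_cons, card_cons, inf'_cons hK]
    push_cast
    linarith

theorem sum_welfare_le_card_sub_one_mul {n : ℕ} (hn : 0 < n) {C : Finset α → ℝ} (hC0 : C ∅ = 0)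
    (hC : ∀ S T : Finset α, C (S ∪ T) + C (S ∩ T) ≤ C S + C T)
    {M : Fin n → Finset α} (hM : Pairwise (Disjoint on M)) {v : Fin n → Finset α → ℝ}
    (hv0 : ∀ i, v i ∅ = 0)
    (hv : (∀ i, ∀ S T : Finset α, S ⊆ M i → T ⊆ M i →
        v i S + v i T ≤ v i (S ∪ T) + v i (S ∩ T)) ∨ n = 2)
    {ALG : Fin n → Finset α} (hALG : ∀ S, S ≤ M → welfare C v S ≤ welfare C v ALG)
    {A : Fin n → Fin n → Finset α} (hA : ∀ i, A i ≤ M) (hAii : ∀ i, A i i = ∅) :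
    ∑ i, welfare C v (A i) ≤ ((n : ℝ) - 1) * welfare C v ALG := by
  rcases hv with hv | rfl
  · have hne : (univ : Finset (Fin n)).Nonempty := univ_nonempty_iff.2 ⟨⟨0, hn⟩⟩
    have hinf : univ.inf' hne A = ⊥ :=
      le_bot_iff.1 fun j => (inf'_le A (mem_univ j) j).trans (hAii j).le
    have hmerge := sum_le_card_sub_one_mul_add_inf' (P := (· ≤ M)) (fun _ _ => sup_le)
      (fun _ _ hS _ => inf_le_of_left_le hS)
      (fun S T hS hT => welfare_add_welfare_le hC hM hS hT fun j => hv j _ _ (hS j) (hT j))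
      hALG hA hne
    rwa [hinf, welfare_bot hC0 hv0, add_zero, card_univ, Fintype.card_fin] at hmerge
  · -- for `n = 2` one of `A 0 j`, `A 1 j` is empty, so no supermodularity of `v` is needed
    have hv2 : ∀ j, v j (A 0 j) + v j (A 1 j) ≤ v j (A 0 j ∪ A 1 j) + v j (A 0 j ∩ A 1 j) :=
      Fin.forall_fin_two.2 ⟨by simp [hAii, add_comm], by simp [hAii]⟩
    have hinf : A 0 ⊓ A 1 = ⊥ := by
      funext j
      fin_cases j <;> simp [hAii]
    have hsuper := welfare_add_welfare_le hC hM (hA 0) (hA 1) hv2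
    rw [hinf, welfare_bot hC0 hv0] at hsuper
    rw [Fin.sum_univ_two, Nat.cast_ofNat]
    linarith [hALG _ (sup_le (hA 0) (hA 1))]

end

theorem stmt14_general [DecidableEq α] (n : ℕ) (M : Fin n → Finset α)
    (hM : ∀ i j : Fin n, i ≠ j → Disjoint (M i) (M j))
    (C : Finset α → ℝ) (hC0 : C ∅ = 0)
    (hCmono : ∀ S T : Finset α, S ⊆ T → C S ≤ C T)
    (hCsub : ∀ S T : Finset α, C (S ∪ T) + C (S ∩ T) ≤ C S + C T)
    (v : Fin n → Finset α → ℝ) (hv0 : ∀ i, v i ∅ = 0)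
    (hcase : (∀ i, ∀ S T : Finset α, S ⊆ M i → T ⊆ M i →
        v i S + v i T ≤ v i (S ∪ T) + v i (S ∩ T)) ∨ n = 2)
    (ALG : Fin n → Finset α) (hALGsub : ∀ i, ALG i ⊆ M i)
    (hALGmax : ∀ S : Fin n → Finset α, (∀ i, S i ⊆ M i) →
      ∑ j, v j (S j) - potential n C S ≤ ∑ j, v j (ALG j) - potential n C ALG)
    (A : Fin n → Fin n → Finset α) (hAsub : ∀ i j, A i j ⊆ M j)
    (hAii : ∀ i, A i i = ∅)
    (hAmax : ∀ i, ∀ S : Fin n → Finset α, (∀ j, S j ⊆ M j) → S i = ∅ →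
      ∑ j, v j (S j) - potential n C S ≤ ∑ j, v j (A i j) - potential n C (A i))
    (p : Fin n → ℝ)
    (hp : ∀ i, p i = (∑ j, v j (A i j) - potential n C (A i)) -
      (∑ j ∈ univ.erase i, v j (ALG j) - potential n C ALG)) :
    C (univ.biUnion ALG) ≤ ∑ i, p i ∧
      ∑ i, p i ≤ (∑ k ∈ Finset.range n, (1 : ℝ) / (k + 1)) * C (univ.biUnion ALG) := by
  rcases n.eq_zero_or_pos with rfl | hn
  · simp [hC0]
  have hp' : ∀ i, p i = welfare C v (A i) - (∑ j ∈ univ.erase i, v j (ALG j)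
      - potential n C ALG) := hp
  have hsum_p : ∑ i, p i = ∑ i, welfare C v (A i) - ((n : ℝ) - 1) * welfare C v ALG
      + potential n C ALG := by
    simp only [hp', welfare, sum_sub_distrib, sum_erase_eq_sub (mem_univ _), sum_const, card_univ,
      Fintype.card_fin, nsmul_eq_mul]
    ring
  refine ⟨?_, ?_⟩
  · rw [← sub_zero (C _), ← hC0, ← sum_potential_sub_potential_update hn C ALG]
    refine sum_le_sum fun i _ => ?_
    have hdev : welfare C v (update ALG i ∅) ≤ welfare C v (A i) :=
      hAmax i _ (update_le_iff.2 ⟨empty_subset _, fun j _ => hALGsub j⟩) (update_self i ∅ ALG)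
    rw [welfare_update_empty C (hv0 i)] at hdev
    linarith [hp' i]
  · linarith [sum_welfare_le_card_sub_one_mul hn hC0 hCsub hM hv0 hcase hALGmax
      hAsub hAii, potential_le_harmonic_mul hCmono ALG]

theorem stmt14 [DecidableEq α] (n : ℕ) (M : Fin n → Finset α)
    (hM : ∀ i j : Fin n, i ≠ j → Disjoint (M i) (M j))
    (C : Finset α → ℝ) (hC0 : C ∅ = 0) (hCnn : ∀ S, 0 ≤ C S)
    (hCmono : ∀ S T : Finset α, S ⊆ T → C S ≤ C T)
    (hCsub : ∀ S T : Finset α, C (S ∪ T) + C (S ∩ T) ≤ C S + C T)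
    (v : Fin n → Finset α → ℝ) (hv0 : ∀ i, v i ∅ = 0)
    (hvmono : ∀ i, ∀ S T : Finset α, S ⊆ T → T ⊆ M i → v i S ≤ v i T)
    (hcase : (∀ i, ∀ S T : Finset α, S ⊆ M i → T ⊆ M i →
        v i S + v i T ≤ v i (S ∪ T) + v i (S ∩ T)) ∨ n = 2)
    (ALG : Fin n → Finset α) (hALGsub : ∀ i, ALG i ⊆ M i)
    (hALGmax : ∀ S : Fin n → Finset α, (∀ i, S i ⊆ M i) →
      ∑ j, v j (S j) - potential n C S ≤ ∑ j, v j (ALG j) - potential n C ALG)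
    (A : Fin n → Fin n → Finset α) (hAsub : ∀ i j, A i j ⊆ M j)
    (hAii : ∀ i, A i i = ∅)
    (hAmax : ∀ i, ∀ S : Fin n → Finset α, (∀ j, S j ⊆ M j) → S i = ∅ →
      ∑ j, v j (S j) - potential n C S ≤ ∑ j, v j (A i j) - potential n C (A i))
    (p : Fin n → ℝ)
    (hp : ∀ i, p i = (∑ j, v j (A i j) - potential n C (A i)) -
      (∑ j ∈ univ.erase i, v j (ALG j) - potential n C ALG)) :
    C (univ.biUnion ALG) ≤ ∑ i, p i ∧
      ∑ i, p i ≤ (∑ k ∈ Finset.range n, (1 : ℝ) / (k + 1)) * C (univ.biUnion ALG) :=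
  stmt14_general n M hM C hC0 hCmono hCsub v hv0 hcase ALG hALGsub hALGmax A hAsub hAii hAmax p hp
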